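/- arXiv:math/0112184 — 2 statements merged into one kernel-verified Lean document; each statement's English description precedes it below -/
import Mathlib

section
/- In the root system of type B₂ with short positive roots α₁, α₁+α₂ and long positive roots α₂, 2α₁+α₂, let W_K be the subgroup of the Weyl group generated by the reflections in the short roots. Then the element w = σ_{α₁+α₂} σ_{α₁} ∈ W_K satisfies w(α₂) = -α₂. Consequently, there is no W_K-equivariant section of the projection (Φ \ Φ_K) → (Φ \ Φ_K)/{±1}, where Φ_K is the set of short roots. -/
/-! The element `w = σ_{α₁+α₂} σ_{α₁}` of `W_K` sends the long root `α₂` to `-α₂`, so any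
`W_K`-stable set of long roots containing exactly one of `±α₂` would contain both. -/

noncomputable def sref {E : Type*} [NormedAddCommGroup E] [InnerProductSpace ℝ E]
    [FiniteDimensional ℝ E] (α : E) : E ≃ₗᵢ[ℝ] E :=
  (ℝ ∙ α)ᗮ.reflection

theorem Set.MapsTo.not_xor_mem_neg {E F : Type*} [AddGroup E] [FunLike F E E]
    [AddMonoidHomClass F E E] {f : F} {Δ : Set E} (hf : Set.MapsTo f Δ Δ) {α : E}
    (hα : f α = -α) : ¬ Xor (α ∈ Δ) (-α ∈ Δ) := by
  have hnα : f (-α) = α := by rw [map_neg, hα, neg_neg]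
  rintro (⟨hmem, hnot⟩ | ⟨hmem, hnot⟩)
  · exact hnot (hα ▸ hf hmem)
  · exact hnot (hnα ▸ hf hmem)

section

variable {E : Type*} [NormedAddCommGroup E] [InnerProductSpace ℝ E] [FiniteDimensional ℝ E]

theorem sref_apply (α x : E) :
    sref α x = x - ((2 : ℝ) * (inner ℝ α x : ℝ) / (inner ℝ α α : ℝ)) • α := by
  rw [sref, Submodule.reflection_apply, Submodule.starProjection_orthogonal_val,
    Submodule.starProjection_singleton, real_inner_self_eq_norm_sq]
  simp only [RCLike.ofReal_real_eq_id, id_eq]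
  module

variable {α₁ α₂ : E} (h11 : (inner ℝ α₁ α₁ : ℝ) = 1) (h12 : (inner ℝ α₁ α₂ : ℝ) = -1)
include h11 h12

theorem sref_apply_eq_add_two_smul : sref α₁ α₂ = α₂ + (2 : ℝ) • α₁ := by
  rw [sref_apply, h11, h12]
  module

theorem sref_add_mul_sref_apply_eq_neg (h22 : (inner ℝ α₂ α₂ : ℝ) = 2) :
    (sref (α₁ + α₂) * sref α₁) α₂ = -α₂ := by
  have h21 : (inner ℝ α₂ α₁ : ℝ) = -1 := by rwa [real_inner_comm]
  rw [LinearIsometryEquiv.coe_mul, Function.comp_apply, sref_apply_eq_add_two_smul h11 h12,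
    sref_apply]
  simp only [inner_add_left, inner_add_right, real_inner_smul_right, h11, h12, h21, h22]
  module

end

/-- In the root system of type `B₂` with short positive roots `α₁, α₁+α₂` and long positive
roots `α₂, 2α₁+α₂` (encoded by the Gram data `⟨α₁,α₁⟩ = 1`, `⟨α₂,α₂⟩ = 2`, `⟨α₁,α₂⟩ = -1`),
the element `w = σ_{α₁+α₂} σ_{α₁}` of `W_K = ⟨σ_{α₁}, σ_{α₁+α₂}⟩` satisfies `w(α₂) = -α₂`;
consequently there is no `W_K`-equivariant section of `(Φ \ Φ_K) → (Φ \ Φ_K)/{±1}`. -/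
theorem b2_no_equivariant_section
    {E : Type*} [NormedAddCommGroup E] [InnerProductSpace ℝ E] [FiniteDimensional ℝ E]
    (α₁ α₂ : E) (h11 : (inner ℝ α₁ α₁ : ℝ) = 1) (h22 : (inner ℝ α₂ α₂ : ℝ) = 2)
    (h12 : (inner ℝ α₁ α₂ : ℝ) = -1) :
    (sref (α₁ + α₂) * sref α₁) α₂ = -α₂ ∧
      ¬ ∃ Δ₀ : Set E,
        Δ₀ ⊆ ({α₂, -α₂, 2 • α₁ + α₂, -(2 • α₁ + α₂)} : Set E) ∧
        (∀ α ∈ ({α₂, -α₂, 2 • α₁ + α₂, -(2 • α₁ + α₂)} : Set E),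
          Xor' (α ∈ Δ₀) (-α ∈ Δ₀)) ∧
        (∀ w ∈ Subgroup.closure {sref α₁, sref (α₁ + α₂)}, ∀ α ∈ Δ₀, w α ∈ Δ₀) := by
  have hw := sref_add_mul_sref_apply_eq_neg h11 h12 h22
  refine ⟨hw, ?_⟩
  rintro ⟨Δ₀, -, hxor, hinv⟩
  have hmem : sref (α₁ + α₂) * sref α₁ ∈ Subgroup.closure {sref α₁, sref (α₁ + α₂)} :=
    mul_mem (Subgroup.subset_closure (by simp)) (Subgroup.subset_closure (by simp))
  exact Set.MapsTo.not_xor_mem_neg (hinv _ hmem) hw (hxor α₂ (by simp))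
end

section
/- Let Δ₀ = {α₂, 3α₁+α₂, -(3α₁+2α₂)} be the W_K-equivariant choice of long roots in the G₂ root system (W_K generated by reflections in short roots). Then α₂ + (3α₁+α₂) + (-(3α₁+2α₂)) = 0; consequently, for every regular ξ, at each vertex of the associated two-vertex GKM graph at least one outgoing edge label is positive and at least one is negative on ξ, so there exists no function f on the two vertices that is strictly increasing along every edge e with α_e(ξ) > 0 (no compatible Morse function exists). -/
/-!
The three long roots of `Δ₀` sum to zero, so their pairings with any `ξ` are three real numbers
with sum zero; if `ξ` is regular they are nonzero, hence one is positive and one negative. Both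
vertices of the GKM graph are joined by these three edges, so a compatible Morse function would
have to increase from `[1]` to `[σ_{α₂}]` along one edge and decrease along another.
-/

open RealInnerProductSpace

theorem pos_or_pos_or_pos_and_neg_or_neg_or_neg_of_add_add_eq_zero
    {M : Type*} [AddCommGroup M] [LinearOrder M] [IsOrderedAddMonoid M] {a b c : M}
    (h : a + b + c = 0) (ha : a ≠ 0) :
    (0 < a ∨ 0 < b ∨ 0 < c) ∧ (a < 0 ∨ b < 0 ∨ c < 0) := by
  constructor
  · by_contra! hle
    obtain ⟨ha', hb', hc'⟩ := hle
    have : a + b + c < 0 := add_neg_of_neg_of_nonpos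
      (add_neg_of_neg_of_nonpos (lt_of_le_of_ne ha' ha) hb') hc'
    exact this.ne h
  · by_contra! hge
    obtain ⟨ha', hb', hc'⟩ := hge
    have : 0 < a + b + c := add_pos_of_pos_of_nonneg
      (add_pos_of_pos_of_nonneg (lt_of_le_of_ne ha' ha.symm) hb') hc'
    exact this.ne' h

section

variable {E : Type*} [NormedAddCommGroup E] [InnerProductSpace ℝ E]

theorem exists_inner_pos_and_exists_inner_neg_of_add_add_eq_zero {u v w : E} (ξ : E)
    (h : u + v + w = 0) (hu : ⟪u, ξ⟫ ≠ 0) :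
    (∃ β ∈ ({u, v, w} : Set E), 0 < ⟪β, ξ⟫) ∧ (∃ β ∈ ({u, v, w} : Set E), ⟪β, ξ⟫ < 0) := by
  have hsum : ⟪u, ξ⟫ + ⟪v, ξ⟫ + ⟪w, ξ⟫ = 0 := by
    rw [← inner_add_left, ← inner_add_left, h, inner_zero_left]
  obtain ⟨hpos, hneg⟩ := pos_or_pos_or_pos_and_neg_or_neg_or_neg_of_add_add_eq_zero hsum hu
  constructor
  · rcases hpos with h | h | h <;> exact ⟨_, by simp, h⟩
  · rcases hneg with h | h | h <;> exact ⟨_, by simp, h⟩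

theorem not_exists_compatible_of_exists_inner_pos_of_exists_inner_neg
    {V : Type*} {S : Set E} {ξ : E} (x y : V)
    (hpos : ∃ β ∈ S, 0 < ⟪β, ξ⟫) (hneg : ∃ β ∈ S, ⟪β, ξ⟫ < 0) :
    ¬ ∃ f : V → ℝ, ∀ β ∈ S, (0 < ⟪β, ξ⟫ → f x < f y) ∧ (0 < ⟪-β, ξ⟫ → f y < f x) := by
  rintro ⟨f, hf⟩
  obtain ⟨β, hβS, hβ⟩ := hpos
  obtain ⟨γ, hγS, hγ⟩ := hneg
  have hγ' : 0 < ⟪-γ, ξ⟫ := by rw [inner_neg_left]; exact neg_pos.mpr hγ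
  exact ((hf β hβS).1 hβ).asymm ((hf γ hγS).2 hγ')

end

theorem g2_no_morse_function_general
    {E : Type*} [NormedAddCommGroup E] [InnerProductSpace ℝ E]
    (α₁ α₂ : E) :
    α₂ + (3 • α₁ + α₂) + (-(3 • α₁ + 2 • α₂)) = 0 ∧
      ∀ ξ : E,
        (∀ β ∈ ({α₁, -α₁, α₁ + α₂, -(α₁ + α₂), 2 • α₁ + α₂, -(2 • α₁ + α₂),
            α₂, -α₂, 3 • α₁ + α₂, -(3 • α₁ + α₂), 3 • α₁ + 2 • α₂,
            -(3 • α₁ + 2 • α₂)} : Set E), (inner ℝ β ξ : ℝ) ≠ 0) →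
        ((∃ β ∈ ({α₂, 3 • α₁ + α₂, -(3 • α₁ + 2 • α₂)} : Set E), 0 < (inner ℝ β ξ : ℝ)) ∧
          (∃ β ∈ ({α₂, 3 • α₁ + α₂, -(3 • α₁ + 2 • α₂)} : Set E), (inner ℝ β ξ : ℝ) < 0)) ∧
        ¬ ∃ f : Fin 2 → ℝ, ∀ β ∈ ({α₂, 3 • α₁ + α₂, -(3 • α₁ + 2 • α₂)} : Set E),
            (0 < (inner ℝ β ξ : ℝ) → f 0 < f 1) ∧ (0 < (inner ℝ (-β) ξ : ℝ) → f 1 < f 0) := by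
  have hsum : α₂ + (3 • α₁ + α₂) + (-(3 • α₁ + 2 • α₂)) = 0 := by
    rw [two_smul]
    abel
  refine ⟨hsum, fun ξ hreg => ?_⟩
  have hsigns := exists_inner_pos_and_exists_inner_neg_of_add_add_eq_zero ξ hsum
    (hreg α₂ (by simp))
  exact ⟨hsigns, not_exists_compatible_of_exists_inner_pos_of_exists_inner_neg 0 1
    hsigns.1 hsigns.2⟩

/-- In the `G₂` root system (Gram data `⟨α₁,α₁⟩ = 2`, `⟨α₂,α₂⟩ = 6`, `⟨α₁,α₂⟩ = -3`), the
`W_K`-equivariant choice of long roots `Δ₀ = {α₂, 3α₁+α₂, -(3α₁+2α₂)}` sums to zero; hence for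
every regular `ξ`, at each of the two vertices of the GKM graph at least one outgoing edge
label pairs positively and at least one pairs negatively with `ξ`, so no Morse function
compatible with `ξ` exists on the two-vertex graph. -/
theorem g2_no_morse_function
    {E : Type*} [NormedAddCommGroup E] [InnerProductSpace ℝ E] [FiniteDimensional ℝ E]
    (α₁ α₂ : E) (h11 : (inner ℝ α₁ α₁ : ℝ) = 2) (h22 : (inner ℝ α₂ α₂ : ℝ) = 6)
    (h12 : (inner ℝ α₁ α₂ : ℝ) = -3) :
    α₂ + (3 • α₁ + α₂) + (-(3 • α₁ + 2 • α₂)) = 0 ∧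
      ∀ ξ : E,
        (∀ β ∈ ({α₁, -α₁, α₁ + α₂, -(α₁ + α₂), 2 • α₁ + α₂, -(2 • α₁ + α₂),
            α₂, -α₂, 3 • α₁ + α₂, -(3 • α₁ + α₂), 3 • α₁ + 2 • α₂,
            -(3 • α₁ + 2 • α₂)} : Set E), (inner ℝ β ξ : ℝ) ≠ 0) →
        ((∃ β ∈ ({α₂, 3 • α₁ + α₂, -(3 • α₁ + 2 • α₂)} : Set E), 0 < (inner ℝ β ξ : ℝ)) ∧
          (∃ β ∈ ({α₂, 3 • α₁ + α₂, -(3 • α₁ + 2 • α₂)} : Set E), (inner ℝ β ξ : ℝ) < 0)) ∧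
        ¬ ∃ f : Fin 2 → ℝ, ∀ β ∈ ({α₂, 3 • α₁ + α₂, -(3 • α₁ + 2 • α₂)} : Set E),
            (0 < (inner ℝ β ξ : ℝ) → f 0 < f 1) ∧ (0 < (inner ℝ (-β) ξ : ℝ) → f 1 < f 0) :=
  g2_no_morse_function_general α₁ α₂
end
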